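/- For v uniformly distributed on the unit sphere in ℝⁿ and A symmetric with eigenvalues λ₁,…,λₙ, the variance of the quadratic form satisfies Var[vᵀ f(A) v] = (2/(n(n+2)))·Σᵢ f(λᵢ)² − (2/(n²(n+2)))·(Σᵢ f(λᵢ))². -/

import Mathlib

open MeasureTheory Matrix

/-!
Orthogonal invariance of the law of `v` lets one replace `fA` by the diagonal matrix of the
`f (lam k)`, so `vᵀ fA v` has the law of `∑ₖ f (lam k) xₖ²` with `x` uniform on the sphere; mean
and variance then only involve the moments `E xₖ²` and `E xₖ² xₗ²`. Swapping two coordinates and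
`∑ₖ xₖ² = 1` give `E xₖ² = 1 / n`. For `k ≠ l`, the Householder reflections through `eₖ ± 2 eₗ`
send `xₖ` to `(3 xₖ ∓ 4 xₗ) / 5`; adding the two resulting identities for `E xₖ⁴` cancels the odd
moments and leaves `E xₖ⁴ = 3 E xₖ² xₗ²`. Finally `∑ₗ xₖ² xₗ² = xₖ²` pins down
`E xₖ⁴ = 3 / (n (n + 2))`.
-/

namespace Matrix

variable {ι : Type*} [Fintype ι]

theorem measurable_mulVec (R : Matrix ι ι ℝ) : Measurable (R *ᵥ · : (ι → ℝ) → ι → ℝ) :=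
  (continuous_const.matrix_mulVec continuous_id).measurable

variable [DecidableEq ι]

noncomputable def householder (u : ι → ℝ) : Matrix ι ι ℝ :=
  1 - (2 / (u ⬝ᵥ u)) • vecMulVec u u

theorem householder_mulVec (u x : ι → ℝ) :
    householder u *ᵥ x = x - (2 * (u ⬝ᵥ x) / (u ⬝ᵥ u)) • u := by
  ext k
  simp only [householder, sub_mulVec, one_mulVec, smul_mulVec, vecMulVec_mulVec, op_smul_eq_smul,
    Pi.sub_apply, Pi.smul_apply, smul_eq_mul]
  ring

theorem transpose_householder_mul_self {u : ι → ℝ} (hu : u ⬝ᵥ u ≠ 0) :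
    (householder u)ᵀ * householder u = 1 := by
  have hsymm : (householder u)ᵀ = householder u := by
    simp [householder, transpose_sub, transpose_smul]
  have hsq : vecMulVec u u * vecMulVec u u = (u ⬝ᵥ u) • vecMulVec u u := by
    rw [vecMulVec_mul_vecMulVec, vecMulVec_smul]
  have hcoeff : 2 / (u ⬝ᵥ u) * (2 / (u ⬝ᵥ u)) * (u ⬝ᵥ u) = 2 * (2 / (u ⬝ᵥ u)) := by
    field_simp
  rw [hsymm, householder, sub_mul, mul_sub, mul_sub, one_mul, one_mul, mul_one, smul_mul_smul,
    hsq, smul_smul, hcoeff, ← smul_smul, two_smul]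
  abel

theorem dotProduct_mulVec_conj_diagonal (Q : Matrix ι ι ℝ) (d x : ι → ℝ) :
    x ⬝ᵥ (Q * diagonal d * Qᵀ) *ᵥ x = ∑ k, d k * (Qᵀ *ᵥ x) k ^ 2 := by
  rw [← mulVec_mulVec, ← mulVec_mulVec, dotProduct_mulVec, ← mulVec_transpose]
  simp only [dotProduct, mulVec_diagonal]
  exact Finset.sum_congr rfl fun k _ => by ring

end Matrix

theorem Fintype.sum_mul_ite_eq {ι : Type*} [Fintype ι] [DecidableEq ι] (b : ι → ℝ) (k : ι)
    (s t : ℝ) : ∑ l, b l * (if k = l then s else t) = t * ∑ l, b l + (s - t) * b k := by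
  have h : ∀ l, b l * (if k = l then s else t) = t * b l + if k = l then (s - t) * b k else 0 := by
    intro l
    split_ifs with hkl
    · subst hkl; ring
    · ring
  simp only [h, Finset.sum_add_distrib, ← Finset.mul_sum, Finset.sum_ite_eq, Finset.mem_univ,
    if_true]

theorem isCompact_sum_sq_eq_one (ι : Type*) [Fintype ι] :
    IsCompact {x : ι → ℝ | ∑ i, x i ^ 2 = 1} := by
  refine (isCompact_closedBall (0 : ι → ℝ) 1).of_isClosed_subset
    (isClosed_eq (by fun_prop) continuous_const) fun x hx => ?_
  rw [mem_closedBall_zero_iff, pi_norm_le_iff_of_nonneg zero_le_one]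
  intro i
  rw [Real.norm_eq_abs, ← sq_le_one_iff_abs_le_one, ← show ∑ j, x j ^ 2 = 1 from hx]
  exact Finset.single_le_sum (fun j _ => sq_nonneg (x j)) (Finset.mem_univ i)

theorem Continuous.integrable_of_ae_sum_sq_eq_one {ι : Type*} [Fintype ι]
    {ν : Measure (ι → ℝ)} [IsFiniteMeasure ν] (hS : ∀ᵐ x ∂ν, ∑ i, x i ^ 2 = 1)
    {g : (ι → ℝ) → ℝ} (hg : Continuous g) : Integrable g ν := by
  rw [← Measure.restrict_eq_self_of_ae_mem hS]
  exact hg.continuousOn.integrableOn_compact (isCompact_sum_sq_eq_one ι)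

namespace MeasureTheory.Measure

variable {ι : Type*} [Fintype ι] [DecidableEq ι]

def IsOrthogonallyInvariant (ν : Measure (ι → ℝ)) : Prop :=
  ∀ R : Matrix ι ι ℝ, Rᵀ * R = 1 → ν.map (R *ᵥ ·) = ν

namespace IsOrthogonallyInvariant

variable {ν : Measure (ι → ℝ)}

theorem integral_comp_mulVec (hν : ν.IsOrthogonallyInvariant) {R : Matrix ι ι ℝ}
    (hR : Rᵀ * R = 1) {g : (ι → ℝ) → ℝ} (hg : AEStronglyMeasurable g ν) :
    ∫ x, g (R *ᵥ x) ∂ν = ∫ x, g x ∂ν := by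
  rw [← integral_map (measurable_mulVec R).aemeasurable (by rwa [hν R hR]), hν R hR]

theorem integral_comp_householder (hν : ν.IsOrthogonallyInvariant) {u : ι → ℝ}
    (hu : u ⬝ᵥ u ≠ 0) {g : (ι → ℝ) → ℝ} (hg : AEStronglyMeasurable g ν) :
    ∫ x, g (x - (2 * (u ⬝ᵥ x) / (u ⬝ᵥ u)) • u) ∂ν = ∫ x, g x ∂ν := by
  simpa only [householder_mulVec] using
    hν.integral_comp_mulVec (transpose_householder_mul_self hu) hg

theorem integral_comp_coord_eq (hν : ν.IsOrthogonallyInvariant) {g : ℝ → ℝ}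
    (hg : Measurable g) (i j : ι) : ∫ x, g (x i) ∂ν = ∫ x, g (x j) ∂ν := by
  rcases eq_or_ne i j with rfl | hij
  · rfl
  have hu : (Pi.single i 1 - Pi.single j 1 : ι → ℝ) ⬝ᵥ (Pi.single i 1 - Pi.single j 1) = 2 := by
    norm_num [dotProduct_sub, hij, hij.symm]
  have := hν.integral_comp_householder (hu.trans_ne two_ne_zero) (g := fun x => g (x i))
    (hg.comp (measurable_pi_apply i)).aestronglyMeasurable
  simpa [hu, hij, hij.symm, dotProduct_sub, Pi.single_apply] using this.symm

theorem integral_comp_coord_reflect (hν : ν.IsOrthogonallyInvariant) {g : ℝ → ℝ}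
    (hg : Measurable g) {i j : ι} (hij : i ≠ j) (c : ℝ) :
    ∫ x, g (((c ^ 2 - 1) * x i - 2 * c * x j) / (1 + c ^ 2)) ∂ν = ∫ x, g (x i) ∂ν := by
  have hu : (Pi.single i 1 + Pi.single j c : ι → ℝ) ⬝ᵥ (Pi.single i 1 + Pi.single j c)
      = 1 + c ^ 2 := by
    simp [dotProduct_add, hij, hij.symm, add_comm, sq]
  have := hν.integral_comp_householder (g := fun x => g (x i))
    (hu.trans_ne (by positivity)) (hg.comp (measurable_pi_apply i)).aestronglyMeasurable
  rw [← this]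
  congr 1 with x
  have hc : 1 + c ^ 2 ≠ 0 := by positivity
  simp only [hu, Pi.sub_apply, Pi.smul_apply, Pi.add_apply, Pi.single_eq_same,
    Pi.single_eq_of_ne hij, smul_eq_mul, add_dotProduct, single_dotProduct]
  congr 1
  field_simp
  ring

theorem integral_coord_sq_mul_coord_sq_of_ne [IsFiniteMeasure ν] (hν : ν.IsOrthogonallyInvariant)
    (hS : ∀ᵐ x ∂ν, ∑ i, x i ^ 2 = 1) {i j : ι} (hij : i ≠ j) :
    ∫ x, x i ^ 2 * x j ^ 2 ∂ν = (∫ x, x i ^ 4 ∂ν) / 3 := by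
  have hint : ∀ g : (ι → ℝ) → ℝ, Continuous g → Integrable g ν :=
    fun g hg => hg.integrable_of_ae_sum_sq_eq_one hS
  have hreflect (c : ℝ) : ∫ x, (((c ^ 2 - 1) * x i - 2 * c * x j) / (1 + c ^ 2)) ^ 4 ∂ν
      = ∫ x, x i ^ 4 ∂ν :=
    hν.integral_comp_coord_reflect (g := (· ^ 4)) (measurable_id.pow_const 4) hij c
  have hj : ∫ x, x j ^ 4 ∂ν = ∫ x, x i ^ 4 ∂ν :=
    hν.integral_comp_coord_eq (g := (· ^ 4)) (measurable_id.pow_const 4) j i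
  have hplus : ∫ x, ((3 * x i - 4 * x j) / 5) ^ 4 ∂ν = ∫ x, x i ^ 4 ∂ν := by
    convert hreflect 2 using 4; norm_num
  have hminus : ∫ x, ((3 * x i + 4 * x j) / 5) ^ 4 ∂ν = ∫ x, x i ^ 4 ∂ν := by
    convert hreflect (-2) using 4; norm_num
  have hsum (x : ι → ℝ) : ((3 * x i - 4 * x j) / 5) ^ 4 + ((3 * x i + 4 * x j) / 5) ^ 4
      = 2 / 625 * (81 * x i ^ 4 + (864 * (x i ^ 2 * x j ^ 2) + 256 * x j ^ 4)) := by
    ring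
  have key := calc
    2 * ∫ x, x i ^ 4 ∂ν
      = ∫ x, ((3 * x i - 4 * x j) / 5) ^ 4 + ((3 * x i + 4 * x j) / 5) ^ 4 ∂ν := by
        rw [integral_add (hint _ (by fun_prop)) (hint _ (by fun_prop)), hplus, hminus]
        ring
    _ = 2 / 625 * (81 * ∫ x, x i ^ 4 ∂ν + (864 * ∫ x, x i ^ 2 * x j ^ 2 ∂ν
          + 256 * ∫ x, x j ^ 4 ∂ν)) := by
        simp only [hsum]
        rw [integral_const_mul, integral_add (hint _ (by fun_prop)) (hint _ (by fun_prop)),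
          integral_add (hint _ (by fun_prop)) (hint _ (by fun_prop)), integral_const_mul,
          integral_const_mul, integral_const_mul]
  rw [hj] at key
  linarith

theorem integral_coord_sq_mul_coord_sq_eq_ite [IsFiniteMeasure ν] (hν : ν.IsOrthogonallyInvariant)
    (hS : ∀ᵐ x ∂ν, ∑ i, x i ^ 2 = 1) (k l : ι) :
    ∫ x, x k ^ 2 * x l ^ 2 ∂ν = (∫ x, x k ^ 4 ∂ν) / 3 * (if k = l then 3 else 1) := by
  split_ifs with hkl
  · subst hkl
    ring_nf
  · rw [hν.integral_coord_sq_mul_coord_sq_of_ne hS hkl, mul_one]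

variable [IsProbabilityMeasure ν]

theorem integral_coord_sq (hν : ν.IsOrthogonallyInvariant) (hS : ∀ᵐ x ∂ν, ∑ i, x i ^ 2 = 1)
    (i : ι) : ∫ x, x i ^ 2 ∂ν = 1 / Fintype.card ι := by
  have hsum : ∑ j, ∫ x, x j ^ 2 ∂ν = 1 := by
    have hint (j : ι) : Integrable (fun x : ι → ℝ => x j ^ 2) ν :=
      Continuous.integrable_of_ae_sum_sq_eq_one hS (by fun_prop)
    rw [← integral_finsetSum _ fun j _ => hint j, integral_congr_ae hS]
    simp
  refine eq_one_div_of_mul_eq_one_left ?_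
  rw [← hsum, Finset.sum_congr rfl fun j _ =>
    hν.integral_comp_coord_eq (g := (· ^ 2)) (measurable_id.pow_const 2) j i]
  simp [mul_comm]

theorem integral_coord_pow_four (hν : ν.IsOrthogonallyInvariant)
    (hS : ∀ᵐ x ∂ν, ∑ i, x i ^ 2 = 1) (k : ι) :
    ∫ x, x k ^ 4 ∂ν = 3 / (Fintype.card ι * (Fintype.card ι + 2)) := by
  have hint (l : ι) : Integrable (fun x : ι → ℝ => x k ^ 2 * x l ^ 2) ν :=
    Continuous.integrable_of_ae_sum_sq_eq_one hS (by fun_prop)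
  have hrow : ∑ l, ∫ x, x k ^ 2 * x l ^ 2 ∂ν = 1 / Fintype.card ι := by
    rw [← integral_finsetSum _ fun l _ => hint l, ← hν.integral_coord_sq hS k]
    refine integral_congr_ae (hS.mono fun x hx => ?_)
    simp only [← Finset.mul_sum, hx, mul_one]
  simp only [hν.integral_coord_sq_mul_coord_sq_eq_ite hS k, Fintype.sum_mul_ite_eq,
    Finset.sum_const, Finset.card_univ, nsmul_eq_mul] at hrow
  have hcard : (Fintype.card ι : ℝ) ≠ 0 := Nat.cast_ne_zero.mpr (Fintype.card_pos_iff.mpr ⟨k⟩).ne'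
  field_simp at hrow ⊢
  linarith

theorem integral_sum_mul_coord_sq (hν : ν.IsOrthogonallyInvariant)
    (hS : ∀ᵐ x ∂ν, ∑ i, x i ^ 2 = 1) (d : ι → ℝ) :
    ∫ x, ∑ k, d k * x k ^ 2 ∂ν = (∑ k, d k) / Fintype.card ι := by
  have hint (k : ι) : Integrable (fun x : ι → ℝ => d k * x k ^ 2) ν :=
    Continuous.integrable_of_ae_sum_sq_eq_one hS (by fun_prop)
  simp only [integral_finsetSum _ fun k _ => hint k, integral_const_mul,
    hν.integral_coord_sq hS, Finset.sum_div, mul_one_div]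

theorem integral_sum_mul_coord_sq_sq (hν : ν.IsOrthogonallyInvariant)
    (hS : ∀ᵐ x ∂ν, ∑ i, x i ^ 2 = 1) (d : ι → ℝ) :
    ∫ x, (∑ k, d k * x k ^ 2) ^ 2 ∂ν
      = ((∑ k, d k) ^ 2 + 2 * ∑ k, d k ^ 2) / (Fintype.card ι * (Fintype.card ι + 2)) := by
  have hint (k l : ι) : Integrable (fun x : ι → ℝ => d k * d l * (x k ^ 2 * x l ^ 2)) ν :=
    Continuous.integrable_of_ae_sum_sq_eq_one hS (by fun_prop)
  have hexpand (x : ι → ℝ) : (∑ k, d k * x k ^ 2) ^ 2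
      = ∑ k, ∑ l, d k * d l * (x k ^ 2 * x l ^ 2) := by
    rw [sq, Finset.sum_mul_sum]
    exact Finset.sum_congr rfl fun k _ => Finset.sum_congr rfl fun l _ => by ring
  simp only [hexpand, integral_finsetSum _ fun k _ => integrable_finsetSum _ fun l _ => hint k l,
    integral_finsetSum _ fun l _ => hint _ l, integral_const_mul,
    hν.integral_coord_sq_mul_coord_sq_eq_ite hS, hν.integral_coord_pow_four hS]
  simp only [← mul_assoc, Fintype.sum_mul_ite_eq, Finset.sum_add_distrib, ← Finset.sum_mul,
    ← Finset.mul_sum]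
  have hdiag : ∑ k, (3 - 1 : ℝ) * d k * d k = 2 * ∑ k, d k ^ 2 := by
    rw [Finset.mul_sum]
    exact Finset.sum_congr rfl fun k _ => by ring
  rw [hdiag]
  ring

end IsOrthogonallyInvariant
end MeasureTheory.Measure

theorem sphere_quadratic_form_variance_general
    {Ω : Type*} [MeasurableSpace Ω] (μ : Measure Ω) [IsProbabilityMeasure μ]
    (n : ℕ) (hn : 0 < n)
    (Q : Matrix (Fin n) (Fin n) ℝ) (lam : Fin n → ℝ) (f : ℝ → ℝ)
    (hQ : Qᵀ * Q = 1)
    (fA : Matrix (Fin n) (Fin n) ℝ)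
    (hfA : fA = Q * Matrix.diagonal (fun i => f (lam i)) * Qᵀ)
    (v : Ω → Fin n → ℝ) (hv : Measurable v)
    (hnorm : ∀ ω, ∑ i, (v ω i) ^ 2 = 1)
    (hrot : ∀ R : Matrix (Fin n) (Fin n) ℝ, Rᵀ * R = 1 →
      Measure.map (fun ω => R.mulVec (v ω)) μ = Measure.map v μ) :
    (∫ ω, (v ω ⬝ᵥ fA.mulVec (v ω)) ^ 2 ∂μ) - (∫ ω, v ω ⬝ᵥ fA.mulVec (v ω) ∂μ) ^ 2 =
      (2 / (n * (n + 2))) * ∑ i, f (lam i) ^ 2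
        - (2 / ((n : ℝ) ^ 2 * (n + 2))) * (∑ i, f (lam i)) ^ 2 := by
  have : IsProbabilityMeasure (μ.map v) := Measure.isProbabilityMeasure_map hv.aemeasurable
  have hν : (μ.map v).IsOrthogonallyInvariant := fun R hR => by
    rw [Measure.map_map (measurable_mulVec R) hv]
    exact hrot R hR
  have hS : ∀ᵐ x ∂μ.map v, ∑ i, x i ^ 2 = 1 :=
    (ae_map_iff hv.aemeasurable (measurableSet_eq_fun (by fun_prop) measurable_const)).2
      (ae_of_all _ hnorm)
  have hQt : Qᵀᵀ * Qᵀ = 1 := by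
    rw [transpose_transpose]
    exact mul_eq_one_comm.mp hQ
  have hmoment (p : ℕ) :
      ∫ ω, (v ω ⬝ᵥ fA *ᵥ v ω) ^ p ∂μ = ∫ x, (∑ k, f (lam k) * x k ^ 2) ^ p ∂μ.map v := by
    have hmeas : Measurable fun x : Fin n → ℝ => (∑ k, f (lam k) * x k ^ 2) ^ p := by fun_prop
    rw [← hν.integral_comp_mulVec hQt hmeas.aestronglyMeasurable,
      integral_map (f := fun x => (∑ k, f (lam k) * (Qᵀ *ᵥ x) k ^ 2) ^ p) hv.aemeasurable
        (hmeas.comp (measurable_mulVec Qᵀ)).aestronglyMeasurable]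
    simp_rw [hfA, dotProduct_mulVec_conj_diagonal]
  have hmean := hmoment 1
  simp only [pow_one] at hmean
  rw [hmoment 2, hmean, hν.integral_sum_mul_coord_sq_sq hS, hν.integral_sum_mul_coord_sq hS,
    Fintype.card_fin]
  have hn' : (n : ℝ) ≠ 0 := by positivity
  field_simp
  ring

/-- Variance of the quadratic form of a uniform unit vector on the sphere:
`Var[vᵀ f(A) v] = (2/(n(n+2))) Σ f(λᵢ)² − (2/(n²(n+2))) (Σ f(λᵢ))²`,
where `Var[X] = E[X²] − (E[X])²`. -/
theorem sphere_quadratic_form_variance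
    {Ω : Type*} [MeasurableSpace Ω] (μ : Measure Ω) [IsProbabilityMeasure μ]
    (n : ℕ) (hn : 0 < n)
    (A Q : Matrix (Fin n) (Fin n) ℝ) (lam : Fin n → ℝ) (f : ℝ → ℝ)
    (hQ : Qᵀ * Q = 1) (hA : A = Q * Matrix.diagonal lam * Qᵀ)
    (fA : Matrix (Fin n) (Fin n) ℝ)
    (hfA : fA = Q * Matrix.diagonal (fun i => f (lam i)) * Qᵀ)
    (v : Ω → Fin n → ℝ) (hv : Measurable v)
    (hnorm : ∀ ω, ∑ i, (v ω i) ^ 2 = 1)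
    (hrot : ∀ R : Matrix (Fin n) (Fin n) ℝ, Rᵀ * R = 1 →
      Measure.map (fun ω => R.mulVec (v ω)) μ = Measure.map v μ) :
    (∫ ω, (v ω ⬝ᵥ fA.mulVec (v ω)) ^ 2 ∂μ) - (∫ ω, v ω ⬝ᵥ fA.mulVec (v ω) ∂μ) ^ 2 =
      (2 / (n * (n + 2))) * ∑ i, f (lam i) ^ 2
        - (2 / ((n : ℝ) ^ 2 * (n + 2))) * (∑ i, f (lam i)) ^ 2 :=
  sphere_quadratic_form_variance_general μ n hn Q lam f hQ fA hfA v hv hnorm hrot
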